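/- Let M be Hermitian with distinct eigenvalues λ₁ > ... > λₙ such that for a given k the sums Σ_{i∈I} λ_i over k-subsets I are pairwise distinct. Suppose the unitary eigenvector matrix g of M satisfies det(g_{[k],I}) ≠ 0 for all k-subsets I. Then the cyclic subspace of the induced operator M_{(k)} on ⋀ᵏ(ℂⁿ) generated by e₁∧...∧e_k is all of ⋀ᵏ(ℂⁿ), i.e., the tridiagonalization (M_{(k)})_T is a C(n,k)×C(n,k) tridiagonal matrix with eigenvalues exactly {Σ_{i∈I} λ_i : I ∈ C([n],k)}. -/

import Mathlib

open Matrix BigOperators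

noncomputable section

/-- The coordinates of the wedge `x₁ ∧ ... ∧ x_k` of vectors in `ℂⁿ` in the standard basis
`{e_{i₁} ∧ ... ∧ e_{i_k}}` of `⋀ᵏ(ℂⁿ)`, indexed by `k`-element subsets of `[n]`. -/
def wedgeCoords {n k : ℕ} (x : Fin k → Fin n → ℂ) :
    {S : Finset (Fin n) // S.card = k} → ℂ :=
  fun S => (Matrix.of fun i j : Fin k => x j (S.1.orderEmbOfFin S.2 i)).det

/-!
The columns of the compound matrix `V = compound k g` are the wedges of `k` eigenvectors of `M`,
hence eigenvectors of `D` with eigenvalues the `k`-sums `μ_I = Σ_{i∈I} λ_i`; by Cauchy–Binet the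
compound of a unitary matrix is unitary, so `D = V diag(μ) V*` and the spectrum is `{μ_I}`.
In this eigenbasis `e₁ ∧ ⋯ ∧ e_k` has the coordinates `conj (det g_{[k],I}) ≠ 0`, so the Krylov
matrix of `e₁ ∧ ⋯ ∧ e_k` factors as `V · diag(c) · Vandermonde(μ)`, which is invertible because
the `μ_I` are distinct.
-/

open Finset

theorem Finset.sum_injective_eq_sum_orderEmbOfFin_perm {α M : Type*} [LinearOrder α] [Fintype α]
    [AddCommMonoid M] {k : ℕ} (F : (Fin k → α) → M) :
    ∑ f ∈ univ.filter Function.Injective, F f =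
      ∑ p : {S : Finset α // S.card = k} × Equiv.Perm (Fin k),
        F (p.1.1.orderEmbOfFin p.1.2 ∘ p.2) := by
  refine (Finset.sum_bij (fun p _ => p.1.1.orderEmbOfFin p.1.2 ∘ p.2) ?_ ?_ ?_ fun _ _ => rfl).symm
  · intro p _
    simpa using (RelEmbedding.injective _).comp p.2.injective
  · rintro ⟨⟨S, hS⟩, σ⟩ - ⟨⟨T, hT⟩, τ⟩ - h
    have himage : ∀ (U : Finset α) (hU : U.card = k) (ρ : Equiv.Perm (Fin k)),
        univ.image (U.orderEmbOfFin hU ∘ ρ) = U := fun U hU ρ => by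
      rw [← Finset.image_image, Finset.image_univ_equiv, Finset.image_orderEmbOfFin_univ]
    obtain rfl : S = T := by rw [← himage S hS σ, ← himage T hT τ, h]
    have hστ : σ = τ := Equiv.ext fun j => (RelEmbedding.injective _) (congrFun h j)
    simp [hστ]
  · intro f hf
    simp only [Finset.mem_filter, Finset.mem_univ, true_and] at hf
    have hcard : (univ.image f).card = k := by
      rw [Finset.card_image_of_injective _ hf, Finset.card_univ, Fintype.card_fin]
    set S : {S : Finset α // S.card = k} := ⟨univ.image f, hcard⟩
    have hmem : ∀ j, f j ∈ S.1 := fun j => Finset.mem_image_of_mem f (Finset.mem_univ j)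
    let σ : Fin k → Fin k := fun j => (S.1.orderIsoOfFin S.2).symm ⟨f j, hmem j⟩
    have hσ : S.1.orderEmbOfFin S.2 ∘ σ = f := by
      funext j
      simp [σ, ← Finset.coe_orderIsoOfFin_apply]
    have hσinj : Function.Injective σ := fun a b hab => hf (by rw [← hσ]; simp [hab])
    exact ⟨⟨S, Equiv.ofBijective σ (Finite.injective_iff_bijective.mp hσinj)⟩,
      Finset.mem_univ _, hσ⟩

namespace Matrix

variable {R : Type*} [CommRing R]

section CauchyBinet

variable {k n : ℕ}

theorem det_mul_eq_sum_fun (A : Matrix (Fin k) (Fin n) R) (B : Matrix (Fin n) (Fin k) R) :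
    (A * B).det = ∑ f : Fin k → Fin n, (∏ j, B (f j) j) * (A.submatrix id f).det := by
  have hcols : (A * B)ᵀ = of fun j => ∑ s, B s j • fun i => A i s := by
    ext j i
    simp [mul_apply, Finset.sum_apply, mul_comm]
  rw [← det_transpose, hcols, ← Fintype.piFinset_univ]
  change detRowAlternating.toMultilinearMap (fun j => ∑ s ∈ univ, B s j • fun i => A i s) = _
  rw [MultilinearMap.map_sum_finset]
  refine Finset.sum_congr rfl fun f _ => ?_
  rw [MultilinearMap.map_smul_univ, smul_eq_mul, ← det_transpose (A.submatrix id f)]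
  rfl

theorem det_mul_eq_sum_det_submatrix (A : Matrix (Fin k) (Fin n) R)
    (B : Matrix (Fin n) (Fin k) R) :
    (A * B).det = ∑ S : {S : Finset (Fin n) // S.card = k},
      (A.submatrix id (S.1.orderEmbOfFin S.2)).det *
        (B.submatrix (S.1.orderEmbOfFin S.2) id).det := by
  have hrepeat : ∀ f : Fin k → Fin n, ¬ Function.Injective f →
      (∏ j, B (f j) j) * (A.submatrix id f).det = 0 := by
    intro f hf
    obtain ⟨i, j, hfij, hij⟩ := Function.not_injective_iff.mp hf
    rw [det_zero_of_column_eq hij fun p => by simp [hfij], mul_zero]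
  rw [det_mul_eq_sum_fun, ← Finset.sum_filter_of_ne fun f _ h => not_not.mp (mt (hrepeat f) h),
    Finset.sum_injective_eq_sum_orderEmbOfFin_perm, Fintype.sum_prod_type]
  refine Finset.sum_congr rfl fun S _ => ?_
  rw [det_apply' (B.submatrix _ id), Finset.mul_sum]
  refine Finset.sum_congr rfl fun σ _ => ?_
  rw [show A.submatrix id (S.1.orderEmbOfFin S.2 ∘ σ) =
    (A.submatrix id (S.1.orderEmbOfFin S.2)).submatrix id σ from rfl, det_permute']
  simp only [submatrix_apply, id, Function.comp_apply]
  ring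

end CauchyBinet

section Compound

variable {l m n : ℕ}

/-- The `k`-th compound matrix of `A`, i.e. the matrix of `⋀ᵏ A` in the bases
`e_{s₁} ∧ ⋯ ∧ e_{s_k}` (`s₁ < ⋯ < s_k`) of the exterior powers. -/
def compound (k : ℕ) (A : Matrix (Fin m) (Fin n) R) :
    Matrix {S : Finset (Fin m) // S.card = k} {T : Finset (Fin n) // T.card = k} R :=
  of fun S T => (A.submatrix (S.1.orderEmbOfFin S.2) (T.1.orderEmbOfFin T.2)).det

theorem compound_apply (k : ℕ) (A : Matrix (Fin m) (Fin n) R)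
    (S : {S : Finset (Fin m) // S.card = k}) (T : {T : Finset (Fin n) // T.card = k}) :
    compound k A S T = (A.submatrix (S.1.orderEmbOfFin S.2) (T.1.orderEmbOfFin T.2)).det :=
  rfl

theorem compound_mul (k : ℕ) (A : Matrix (Fin l) (Fin m) R) (B : Matrix (Fin m) (Fin n) R) :
    compound k (A * B) = compound k A * compound k B := by
  ext S T
  rw [compound_apply, submatrix_mul _ _ _ id _ Function.bijective_id,
    det_mul_eq_sum_det_submatrix, mul_apply]
  rfl

theorem compound_one (k : ℕ) : compound k (1 : Matrix (Fin n) (Fin n) R) = 1 := by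
  ext S T
  by_cases hST : S = T
  · subst hST
    rw [compound_apply, one_apply_eq]
    exact (congrArg det (submatrix_one_embedding (S.1.orderEmbOfFin S.2).toEmbedding)).trans
      det_one
  · have hsub : ¬ S.1 ⊆ T.1 := fun h =>
      hST (Subtype.ext (Finset.eq_of_subset_of_card_le h (by rw [S.2, T.2])))
    obtain ⟨a, haS, haT⟩ := Finset.not_subset.mp hsub
    obtain ⟨i, rfl⟩ : a ∈ Set.range (S.1.orderEmbOfFin S.2) := by
      rwa [Finset.range_orderEmbOfFin]
    rw [one_apply_ne hST, compound_apply]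
    refine det_eq_zero_of_row_eq_zero i fun j => one_apply_ne ?_
    rintro h
    exact haT (h ▸ Finset.orderEmbOfFin_mem T.1 T.2 j)

theorem compound_conjTranspose [StarRing R] (k : ℕ) (A : Matrix (Fin m) (Fin n) R) :
    compound k Aᴴ = (compound k A)ᴴ := by
  ext S T
  rw [conjTranspose_apply, compound_apply, compound_apply, ← conjTranspose_submatrix,
    det_conjTranspose]

theorem compound_mem_unitaryGroup [StarRing R] (k : ℕ) {g : Matrix (Fin n) (Fin n) R}
    (hg : g ∈ unitaryGroup (Fin n) R) : compound k g ∈ unitaryGroup _ R := by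
  have hcompound : ∀ {A B : Matrix (Fin n) (Fin n) R}, A * B = 1 →
      compound k A * compound k B = 1 := fun h => by rw [← compound_mul, h, compound_one]
  rw [Unitary.mem_iff, star_eq_conjTranspose, ← compound_conjTranspose] at *
  exact ⟨hcompound hg.1, hcompound hg.2⟩

end Compound

section Wedge

variable {k n : ℕ}

theorem wedgeCoords_update_smul (x : Fin k → Fin n → ℂ) (i : Fin k) (c : ℂ) :
    wedgeCoords (Function.update x i (c • x i)) = c • wedgeCoords x := by
  funext S
  have hcol : (of fun p q : Fin k => Function.update x i (c • x i) q (S.1.orderEmbOfFin S.2 p)) =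
      (of fun p q : Fin k => x q (S.1.orderEmbOfFin S.2 p)).updateCol i
        (c • fun p => x i (S.1.orderEmbOfFin S.2 p)) := by
    ext p q
    by_cases hq : q = i <;> simp [hq]
  rw [wedgeCoords, hcol, det_updateCol_smul]
  exact congrArg (c * ·) (congrArg det (updateCol_eq_self _ i))

theorem compound_col_eq_wedgeCoords {m : ℕ} (g : Matrix (Fin n) (Fin m) ℂ)
    (T : {T : Finset (Fin m) // T.card = k}) :
    (compound k g).col T = wedgeCoords fun j => g.col (T.1.orderEmbOfFin T.2 j) :=
  rfl

theorem mulVec_wedgeCoords_of_mulVec_eq_smul {M : Matrix (Fin n) (Fin n) ℂ}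
    {D : Matrix {S : Finset (Fin n) // S.card = k} {S : Finset (Fin n) // S.card = k} ℂ}
    (hD : ∀ x : Fin k → Fin n → ℂ,
      D *ᵥ wedgeCoords x = ∑ i, wedgeCoords (Function.update x i (M *ᵥ x i)))
    {x : Fin k → Fin n → ℂ} {c : Fin k → ℂ} (hx : ∀ i, M *ᵥ x i = c i • x i) :
    D *ᵥ wedgeCoords x = (∑ i, c i) • wedgeCoords x := by
  simp only [hD, hx, wedgeCoords_update_smul, Finset.sum_smul]

theorem mul_compound_eq_compound_mul_diagonal {M g : Matrix (Fin n) (Fin n) ℂ} {d : Fin n → ℂ}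
    (hMg : M * g = g * diagonal d)
    {D : Matrix {S : Finset (Fin n) // S.card = k} {S : Finset (Fin n) // S.card = k} ℂ}
    (hD : ∀ x : Fin k → Fin n → ℂ,
      D *ᵥ wedgeCoords x = ∑ i, wedgeCoords (Function.update x i (M *ᵥ x i))) :
    D * compound k g = compound k g * diagonal fun T => ∑ i ∈ T.1, d i := by
  have heigen : ∀ i, M *ᵥ g.col i = d i • g.col i := fun i => by
    rw [← mulVec_single_one, mulVec_mulVec, hMg, ← mulVec_mulVec, diagonal_mulVec_single, mul_one,
      mulVec_single, op_smul_eq_smul, mulVec_single_one]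
  refine ext_of_mulVec_single fun T => ?_
  rw [← mulVec_mulVec, ← mulVec_mulVec, mulVec_single_one, diagonal_mulVec_single, mul_one,
    mulVec_single, op_smul_eq_smul, compound_col_eq_wedgeCoords,
    mulVec_wedgeCoords_of_mulVec_eq_smul hD fun j => heigen _,
    ← Finset.sum_image fun _ _ _ _ h => (RelEmbedding.injective _) h,
    Finset.image_orderEmbOfFin_univ]

end Wedge

section Diagonalizable

variable {K ι : Type*} [Field K] [Fintype ι] [DecidableEq ι]

theorem pow_mul_eq_mul_diagonal_pow {D V : Matrix ι ι K} {μ : ι → K}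
    (hDV : D * V = V * diagonal μ) (j : ℕ) : D ^ j * V = V * diagonal (μ ^ j) := by
  rw [← diagonal_pow]
  exact (SemiconjBy.pow_right hDV.symm j).symm

theorem span_range_pow_mulVec_eq_top {D V : Matrix ι ι K} {μ : ι → K}
    (hμ : Function.Injective μ) (hV : IsUnit V) (hDV : D * V = V * diagonal μ)
    {c : ι → K} (hc : ∀ i, c i ≠ 0) :
    Submodule.span K (Set.range fun j : ℕ => (D ^ j) *ᵥ (V *ᵥ c)) = ⊤ := by
  let e := Fintype.equivFin ι
  let B : Matrix ι ι K := of fun i t => ((D ^ (e t : ℕ)) *ᵥ (V *ᵥ c)) i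
  have hpow : ∀ j : ℕ, (D ^ j) *ᵥ (V *ᵥ c) = V *ᵥ fun i => μ i ^ j * c i := fun j => by
    rw [mulVec_mulVec, pow_mul_eq_mul_diagonal_pow hDV, ← mulVec_mulVec]
    congr 1
    ext i
    simp [mulVec_diagonal]
  have hB : B = V * (diagonal c * (vandermonde (μ ∘ e.symm)).submatrix e e) := by
    have hW : diagonal c * (vandermonde (μ ∘ e.symm)).submatrix e e =
        of fun i t => μ i ^ (e t : ℕ) * c i := by
      ext i t
      simp [diagonal_mul, mul_comm]
    ext i t
    rw [hW]
    change ((D ^ (e t : ℕ)) *ᵥ (V *ᵥ c)) i = _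
    rw [hpow, mul_apply]
    rfl
  have hBunit : IsUnit B := by
    rw [hB, isUnit_iff_isUnit_det, det_mul, det_mul, det_submatrix_equiv_self, det_diagonal,
      isUnit_iff_ne_zero]
    refine mul_ne_zero ((isUnit_iff_isUnit_det V).mp hV).ne_zero
      (mul_ne_zero (Finset.prod_ne_zero_iff.mpr fun i _ => hc i) ?_)
    exact det_vandermonde_ne_zero_iff.mpr (hμ.comp e.symm.injective)
  rw [eq_top_iff,
    ← (LinearMap.range_eq_top (f := B.mulVecLin)).mpr (mulVec_surjective_iff_isUnit.mpr hBunit),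
    range_mulVecLin]
  exact Submodule.span_mono (Set.range_subset_iff.mpr fun t => ⟨e t, rfl⟩)

theorem spectrum_mul_diagonal_mul_star [StarRing K] {V : Matrix ι ι K}
    (hV : V ∈ unitaryGroup ι K) (μ : ι → K) :
    spectrum K (V * diagonal μ * star V) = Set.range μ :=
  (Unitary.spectrum_star_right_conjugate (U := ⟨V, hV⟩)).trans (spectrum_diagonal μ)

end Diagonalizable

end Matrix

theorem stmt19_general {n : ℕ} (M g : Matrix (Fin n) (Fin n) ℂ)
    (lam : Fin n → ℝ)
    (hg : g ∈ Matrix.unitaryGroup (Fin n) ℂ)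
    (hspec : M = g * Matrix.diagonal (fun i => (lam i : ℂ)) * star g)
    (k : ℕ) (hk : k ≤ n)
    (hsums : ∀ S T : Finset (Fin n), S.card = k → T.card = k →
      ∑ i ∈ S, lam i = ∑ i ∈ T, lam i → S = T)
    (hminors : ∀ S : {S : Finset (Fin n) // S.card = k},
      (g.submatrix (Fin.castLE hk) (fun j => S.1.orderEmbOfFin S.2 j)).det ≠ 0)
    (D : Matrix {S : Finset (Fin n) // S.card = k} {S : Finset (Fin n) // S.card = k} ℂ)
    (hD : ∀ x : Fin k → Fin n → ℂ,
      D.mulVec (wedgeCoords x) =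
        ∑ i : Fin k, wedgeCoords (Function.update x i (M.mulVec (x i))))
    (S₀ : {S : Finset (Fin n) // S.card = k})
    (hS₀ : S₀.1 = Finset.image (Fin.castLE hk) Finset.univ) :
    Submodule.span ℂ (Set.range fun j : ℕ => (D ^ j).mulVec (Pi.single S₀ 1)) = ⊤ ∧
    spectrum ℂ D = {x : ℂ | ∃ S : Finset (Fin n), S.card = k ∧ x = ((∑ i ∈ S, lam i : ℝ) : ℂ)} := by
  set V := compound k g
  have hV : V ∈ unitaryGroup _ ℂ := compound_mem_unitaryGroup k hg
  have hMg : M * g = g * diagonal fun i => (lam i : ℂ) := by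
    rw [hspec, Matrix.mul_assoc _ (star g), (Unitary.mem_iff.mp hg).1, Matrix.mul_one]
  have hDV := mul_compound_eq_compound_mul_diagonal hMg hD
  set μ := fun T : {S : Finset (Fin n) // S.card = k} => ∑ i ∈ T.1, (lam i : ℂ)
  have hμ : Function.Injective μ := fun S T h =>
    Subtype.ext (hsums _ _ S.2 T.2 (by simp only [μ] at h; exact_mod_cast h))
  refine ⟨?_, ?_⟩
  · have hS₀emb : (Fin.castLE hk : Fin k → Fin n) = S₀.1.orderEmbOfFin S₀.2 :=
      Finset.orderEmbOfFin_unique S₀.2 (fun i => hS₀ ▸ Finset.mem_image_of_mem _ (mem_univ i))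
        (Fin.strictMono_castLE hk)
    have hsingle : Pi.single S₀ 1 = V *ᵥ (star V).col S₀ := by
      rw [← mulVec_single_one, mulVec_mulVec, (Unitary.mem_iff.mp hV).2, one_mulVec]
    rw [hsingle]
    refine span_range_pow_mulVec_eq_top hμ (Unitary.toUnits ⟨V, hV⟩).isUnit hDV fun T => ?_
    simpa [V, compound_apply, ← hS₀emb] using hminors T
  · rw [← Matrix.mul_one D, ← (Unitary.mem_iff.mp hV).2, ← Matrix.mul_assoc, hDV,
      spectrum_mul_diagonal_mul_star hV]
    ext x
    simp [μ, eq_comm]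

/-- let `M = g Diag(λ) g⁻¹` be Hermitian with distinct eigenvalues
`λ₁ > ... > λₙ`, such that the sums `Σ_{i∈I} λ_i` over `k`-subsets `I` are pairwise
distinct and all minors `det(g_{[k],I})` are nonzero. Then the cyclic subspace of the
induced operator `M_{(k)}` on `⋀ᵏ(ℂⁿ)` generated by `e₁∧...∧e_k` is all of `⋀ᵏ(ℂⁿ)`,
and the set of eigenvalues of `M_{(k)}` (hence of its tridiagonalization `(M_{(k)})_T`,
which is then `C(n,k) × C(n,k)`) is exactly `{Σ_{i∈I} λ_i : I a k-subset}`. -/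
theorem stmt19 {n : ℕ} (M g : Matrix (Fin n) (Fin n) ℂ) (hM : M.IsHermitian)
    (lam : Fin n → ℝ) (hlam : StrictAnti lam)
    (hg : g ∈ Matrix.unitaryGroup (Fin n) ℂ)
    (hspec : M = g * Matrix.diagonal (fun i => (lam i : ℂ)) * star g)
    (k : ℕ) (hk : k ≤ n)
    (hsums : ∀ S T : Finset (Fin n), S.card = k → T.card = k →
      ∑ i ∈ S, lam i = ∑ i ∈ T, lam i → S = T)
    (hminors : ∀ S : {S : Finset (Fin n) // S.card = k},
      (g.submatrix (Fin.castLE hk) (fun j => S.1.orderEmbOfFin S.2 j)).det ≠ 0)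
    (D : Matrix {S : Finset (Fin n) // S.card = k} {S : Finset (Fin n) // S.card = k} ℂ)
    (hD : ∀ x : Fin k → Fin n → ℂ,
      D.mulVec (wedgeCoords x) =
        ∑ i : Fin k, wedgeCoords (Function.update x i (M.mulVec (x i))))
    (S₀ : {S : Finset (Fin n) // S.card = k})
    (hS₀ : S₀.1 = Finset.image (Fin.castLE hk) Finset.univ) :
    Submodule.span ℂ (Set.range fun j : ℕ => (D ^ j).mulVec (Pi.single S₀ 1)) = ⊤ ∧
    spectrum ℂ D = {x : ℂ | ∃ S : Finset (Fin n), S.card = k ∧ x = ((∑ i ∈ S, lam i : ℝ) : ℂ)} :=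
  stmt19_general M g lam hg hspec k hk hsums hminors D hD S₀ hS₀
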